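/- Every Alexandrov space of finite height is quasi-sober: every nonempty irreducible closed subset has a generic point, i.e., is the closure of a singleton. -/

import Mathlib

/-- The height of a topological space: the supremum of lengths of strictly
increasing chains of point closures, as an element of `WithBot ℕ∞`. -/
noncomputable def topHeight (X : Type*) [TopologicalSpace X] : WithBot ℕ∞ :=
  Order.krullDim {S : Set X // ∃ x : X, S = closure {x}}

/-!
In an Alexandrov space every point `x` has a smallest open neighbourhood, made of the points
specializing to `x`. Hence any two points `x, y` of an irreducible set `T` have a common
generization `z ∈ T`. Finite height lets us choose `x ∈ T` with no strictly more generic point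
in `T`; then `z` is as special as `x`, so every `y ∈ T` lies in the closure of `x`.
-/

open Order Topology

lemma Order.wellFoundedGT_of_krullDim_ne_top {α : Type*} [Preorder α] (h : krullDim α ≠ ⊤) :
    WellFoundedGT α := by
  cases isEmpty_or_nonempty α
  · infer_instance
  · have : FiniteDimensionalOrder α :=
      finiteDimensionalOrder_iff_krullDim_ne_bot_and_top.2 ⟨krullDim_ne_bot_iff.2 ‹_›, h⟩
    exact ⟨SetRel.IsWellFounded.inv_of_finiteDimensional {(a, b) : α × α | a < b}⟩

lemma exists_mem_forall_specializes_imp_specializes_of_topHeight_ne_top {X : Type*}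
    [TopologicalSpace X] (hfin : topHeight X ≠ ⊤) {T : Set X} (hT : T.Nonempty) :
    ∃ x ∈ T, ∀ z ∈ T, z ⤳ x → x ⤳ z := by
  have := wellFoundedGT_of_krullDim_ne_top hfin
  let c : X → {S : Set X // ∃ x : X, S = closure {x}} := fun x ↦ ⟨closure {x}, x, rfl⟩
  obtain ⟨x, hxT, hmax⟩ := (wellFounded_gt.onFun (f := c)).has_min T hT
  refine ⟨x, hxT, fun z hzT hzx ↦ ?_⟩
  rw [specializes_iff_closure_subset] at hzx ⊢
  by_contra hxz
  exact hmax z hzT ⟨hzx, hxz⟩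

lemma IsPreirreducible.exists_mem_specializes_specializes {X : Type*} [TopologicalSpace X]
    [AlexandrovDiscrete X] {T : Set X} (hT : IsPreirreducible T) {x y : X} (hx : x ∈ T)
    (hy : y ∈ T) : ∃ z ∈ T, z ⤳ x ∧ z ⤳ y := by
  obtain ⟨z, hzT, hzx, hzy⟩ := hT (nhdsKer {x}) (nhdsKer {y}) isOpen_nhdsKer isOpen_nhdsKer
    ⟨x, hx, mem_nhdsKer_singleton.2 specializes_rfl⟩
    ⟨y, hy, mem_nhdsKer_singleton.2 specializes_rfl⟩
  exact ⟨z, hzT, mem_nhdsKer_singleton.1 hzx, mem_nhdsKer_singleton.1 hzy⟩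

/-- Every Alexandrov space of finite height is quasi-sober: every nonempty
irreducible closed subset has a generic point. -/
theorem quasiSober_of_alexandrov_finite_height {X : Type*} [TopologicalSpace X]
    [AlexandrovDiscrete X] (hfin : topHeight X ≠ ⊤) :
    QuasiSober X := by
  refine ⟨fun {T} hT hTc ↦ ?_⟩
  obtain ⟨x, hxT, hmax⟩ :=
    exists_mem_forall_specializes_imp_specializes_of_topHeight_ne_top hfin hT.nonempty
  refine ⟨x, (closure_minimal (Set.singleton_subset_iff.2 hxT) hTc).antisymm fun y hyT ↦ ?_⟩
  obtain ⟨z, hzT, hzx, hzy⟩ := hT.isPreirreducible.exists_mem_specializes_specializes hxT hyT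
  exact specializes_iff_mem_closure.1 ((hmax z hzT hzx).trans hzy)
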